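/- For natural numbers k, l, m, N with k ≤ N, l ≤ N, m ≤ N and k ≤ l + m, one has a_{k,N} · p_{l,N} · p_{m,N} ≤ (6/5) · N^{k−l−m}, where p and a are as defined from the configuration model. -/

import Mathlib

/-!
Both `a_{k,N}` and `1 / p_{k,N}` are products of `k` factors, so `a_{k,N} p_{u,N} p_{v,N}` with
`k = u + v` pairs the factor `6N - 3i` of `a` with the factor `6N - 2j - 1` of `1 / p`, where
`j = i` for `i < u` and `j = i - u` otherwise. Every such ratio is at most `1`, except the
ratio `6N / (6N - 1) ≤ 6/5` of the very first pair. Splitting `k = u + v` with `u ≤ l`, `v ≤ m`,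
the remaining `l - u` and `m - v` factors of `1 / p_{l,N}` and `1 / p_{m,N}` are each at least `N`.
-/

open Finset

/-- `p_{j,N} = ∏_{i=1}^{j} 1/(6N−2i+1)`. -/
noncomputable def pCfg (l N : ℕ) : ℝ :=
  ∏ j ∈ Finset.range l, 1 / (6 * (N : ℝ) - 2 * ((j : ℝ) + 1) + 1)

/-- `a_{j,N} = 3^j · 2N(2N−1)⋯(2N−j+1)`. -/
noncomputable def aCfg (k N : ℕ) : ℝ :=
  3 ^ k * ∏ j ∈ Finset.range k, (2 * (N : ℝ) - (j : ℝ))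

noncomputable def cfgRatio (N i j : ℕ) : ℝ :=
  3 * (2 * (N : ℝ) - (i : ℝ)) * (1 / (6 * (N : ℝ) - 2 * ((j : ℝ) + 1) + 1))

section

variable {i j k u v w N : ℕ}

lemma pCfg_denom_ge (hj : j < N) : (N : ℝ) < 6 * (N : ℝ) - 2 * ((j : ℝ) + 1) + 1 := by
  have : (j : ℝ) + 1 ≤ N := by exact_mod_cast hj
  linarith

lemma pCfg_denom_pos (hj : j < N) : 0 < 6 * (N : ℝ) - 2 * ((j : ℝ) + 1) + 1 :=
  (Nat.cast_nonneg N).trans_lt (pCfg_denom_ge hj)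

lemma pCfg_nonneg (hk : k ≤ N) : 0 ≤ pCfg k N :=
  prod_nonneg fun _ hj => (one_div_pos.2 (pCfg_denom_pos (by simp at hj; omega))).le

lemma aCfg_eq_prod : aCfg k N = ∏ j ∈ range k, 3 * (2 * (N : ℝ) - j) := by
  rw [aCfg, prod_mul_distrib, prod_const, card_range]

lemma aCfg_nonneg (hk : k ≤ 2 * N) : 0 ≤ aCfg k N := by
  rw [aCfg_eq_prod]
  refine prod_nonneg fun j hj => ?_
  have : (j : ℝ) ≤ 2 * N := by exact_mod_cast (by simp at hj; omega : j ≤ 2 * N)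
  linarith

lemma aCfg_mul_pCfg_eq_prod : aCfg k N * pCfg k N = ∏ j ∈ range k, cfgRatio N j j := by
  rw [aCfg_eq_prod, pCfg, ← prod_mul_distrib]
  rfl

lemma cfgRatio_nonneg (hi : i ≤ 2 * N) (hj : j < N) : 0 ≤ cfgRatio N i j := by
  have : (i : ℝ) ≤ 2 * N := by exact_mod_cast hi
  exact mul_nonneg (by linarith) (one_div_pos.2 (pCfg_denom_pos hj)).le

lemma cfgRatio_le_one (hi : 0 < i) (hji : j ≤ i) (hj : j < N) : cfgRatio N i j ≤ 1 := by
  rw [cfgRatio, mul_one_div, div_le_one (pCfg_denom_pos hj)]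
  have : (1 : ℝ) ≤ i := by exact_mod_cast hi
  have : (j : ℝ) ≤ i := by exact_mod_cast hji
  linarith

lemma cfgRatio_zero_zero_le (hN : 0 < N) : cfgRatio N 0 0 ≤ 6 / 5 := by
  have : (1 : ℝ) ≤ N := by exact_mod_cast hN
  rw [cfgRatio, mul_one_div, div_le_iff₀ (pCfg_denom_pos hN)]
  push_cast
  linarith

lemma aCfg_mul_pCfg_le (hk : k ≤ N) : aCfg k N * pCfg k N ≤ 6 / 5 := by
  rw [aCfg_mul_pCfg_eq_prod]
  rcases k with _ | k
  · norm_num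
  rw [prod_range_succ']
  have htail : ∏ j ∈ range k, cfgRatio N (j + 1) (j + 1) ≤ 1 :=
    prod_le_one (fun j hj => cfgRatio_nonneg (by simp at hj; omega) (by simp at hj; omega))
      fun j hj => cfgRatio_le_one j.succ_pos le_rfl (by simp at hj; omega)
  calc (∏ j ∈ range k, cfgRatio N (j + 1) (j + 1)) * cfgRatio N 0 0
      ≤ 1 * (6 / 5) :=
        mul_le_mul htail (cfgRatio_zero_zero_le (by omega))
          (cfgRatio_nonneg (by omega) (by omega)) zero_le_one
    _ = 6 / 5 := one_mul _

lemma aCfg_add_mul_pCfg_mul_pCfg_le (hu : u ≤ N) (hv : v ≤ N) :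
    aCfg (u + v) N * pCfg u N * pCfg v N ≤ 6 / 5 := by
  rcases u.eq_zero_or_pos with rfl | hu0
  · simpa [pCfg] using aCfg_mul_pCfg_le hv
  set shifted := ∏ j ∈ range v, 3 * (2 * (N : ℝ) - ((u + j : ℕ) : ℝ))
  have hratio : shifted * pCfg v N = ∏ j ∈ range v, cfgRatio N (u + j) j := by
    rw [pCfg, ← prod_mul_distrib]
    rfl
  have hshift_nonneg : 0 ≤ shifted * pCfg v N := by
    rw [hratio]
    exact prod_nonneg fun j hj => cfgRatio_nonneg (by simp at hj; omega) (by simp at hj; omega)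
  have hshift_le : shifted * pCfg v N ≤ 1 := by
    rw [hratio]
    exact prod_le_one (fun j hj => cfgRatio_nonneg (by simp at hj; omega) (by simp at hj; omega))
      fun j hj => cfgRatio_le_one (by omega) (by omega) (by simp at hj; omega)
  rw [aCfg_eq_prod, prod_range_add, ← aCfg_eq_prod]
  calc aCfg u N * shifted * pCfg u N * pCfg v N
      = (aCfg u N * pCfg u N) * (shifted * pCfg v N) := by ring
    _ ≤ 6 / 5 * 1 := mul_le_mul (aCfg_mul_pCfg_le hu) hshift_le hshift_nonneg (by norm_num)
    _ = 6 / 5 := mul_one _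

lemma pCfg_add_le_div_pow (h : u + w ≤ N) : pCfg (u + w) N ≤ pCfg u N / (N : ℝ) ^ w := by
  rw [pCfg, prod_range_add, ← pCfg, div_eq_mul_inv, ← inv_pow]
  refine mul_le_mul_of_nonneg_left ?_ (pCfg_nonneg (by omega))
  calc ∏ j ∈ range w, 1 / (6 * (N : ℝ) - 2 * (((u + j : ℕ) : ℝ) + 1) + 1)
      ≤ ∏ _j ∈ range w, (N : ℝ)⁻¹ := by
        refine prod_le_prod (fun j hj => (one_div_pos.2 (pCfg_denom_pos ?_)).le) fun j hj => ?_
        · simp at hj; omega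
        have hj : u + j < N := by simp at hj; omega
        rw [one_div]
        exact inv_anti₀ (by exact_mod_cast (by omega : 0 < N)) (pCfg_denom_ge hj).le
    _ = (N : ℝ)⁻¹ ^ w := by rw [prod_const, card_range]

end

theorem aCfg_mul_pCfg_pCfg_le_general (k l m N : ℕ) (hlN : l ≤ N) (hmN : m ≤ N) (hklm : k ≤ l + m) :
    aCfg k N * pCfg l N * pCfg m N
      ≤ (6 / 5) * (N : ℝ) ^ ((k : ℤ) - (l : ℤ) - (m : ℤ)) := by
  obtain ⟨u, v, rfl, hul, hvm⟩ : ∃ u v, k = u + v ∧ u ≤ l ∧ v ≤ m :=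
    ⟨min k l, k - min k l, by omega, min_le_right _ _, by omega⟩
  obtain ⟨l', rfl⟩ := Nat.exists_eq_add_of_le hul
  obtain ⟨m', rfl⟩ := Nat.exists_eq_add_of_le hvm
  have hexp : ((u + v : ℕ) : ℤ) - (u + l' : ℕ) - (v + m' : ℕ) = -((l' + m' : ℕ) : ℤ) := by
    push_cast; ring
  rw [hexp, zpow_neg, zpow_natCast, ← div_eq_mul_inv, pow_add]
  have ha := aCfg_nonneg (k := u + v) (N := N) (by omega)
  have hpu := pCfg_nonneg (k := u) (N := N) (by omega)
  have hpm := pCfg_nonneg hmN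
  calc aCfg (u + v) N * pCfg (u + l') N * pCfg (v + m') N
      ≤ aCfg (u + v) N * (pCfg u N / (N : ℝ) ^ l') * (pCfg v N / (N : ℝ) ^ m') := by
        gcongr
        · exact pCfg_add_le_div_pow hlN
        · exact pCfg_add_le_div_pow hmN
    _ = aCfg (u + v) N * pCfg u N * pCfg v N / ((N : ℝ) ^ l' * (N : ℝ) ^ m') := by ring
    _ ≤ 6 / 5 / ((N : ℝ) ^ l' * (N : ℝ) ^ m') := by
        gcongr
        exact aCfg_add_mul_pCfg_mul_pCfg_le (by omega) (by omega)

/-- For `k, l, m ≤ N` with `k ≤ l + m` and `k, l, m ≥ 1`: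
`a_{k,N}·p_{l,N}·p_{m,N} ≤ (6/5)·N^{k−l−m}`. -/
theorem aCfg_mul_pCfg_pCfg_le (k l m N : ℕ) (hk : 0 < k) (hl : 0 < l) (hm : 0 < m)
    (hkN : k ≤ N) (hlN : l ≤ N) (hmN : m ≤ N) (hklm : k ≤ l + m) :
    aCfg k N * pCfg l N * pCfg m N
      ≤ (6 / 5) * (N : ℝ) ^ ((k : ℤ) - (l : ℤ) - (m : ℤ)) :=
  aCfg_mul_pCfg_pCfg_le_general k l m N hlN hmN hklm
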